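/- lim_{N→∞} (1/√N) · ∫₀^{√N} r · e^{2r²} · erfc(√2 · r) · Q(N-1, r²) dr = 1/√(2π). (This asymptotic controls the correction term in the expected number of complex eigenvalues of the real Ginibre ensemble inside the limiting support.) -/

import Mathlib

open MeasureTheory Real Filter

/-- The lower incomplete gamma function `γ(n,x) = ∫₀^x t^(n-1) e^(-t) dt`. -/
noncomputable def lowGamma (n x : ℝ) : ℝ := ∫ t in (0:ℝ)..x, t ^ (n - 1) * Real.exp (-t)

/-- The regularized lower incomplete gamma function `P(n,x) = γ(n,x)/Γ(n)`. -/
noncomputable def regP (n x : ℝ) : ℝ := (Real.Gamma n)⁻¹ * lowGamma n x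

/-- The regularized upper incomplete gamma function `Q(n,x) = 1 - P(n,x)`. -/
noncomputable def regQ (n x : ℝ) : ℝ := 1 - regP n x

/-- The error function `erf(x) = (2/√π) ∫₀^x e^(-t²) dt`. -/
noncomputable def erf (x : ℝ) : ℝ := (2 / Real.sqrt π) * ∫ t in (0:ℝ)..x, Real.exp (-t ^ 2)

/-- The complementary error function `erfc(x) = 1 - erf(x)`. -/
noncomputable def erfc (x : ℝ) : ℝ := 1 - erf x

/-!
Substituting `r = √N s` turns the quantity into `∫₀¹ g(√N s) Q(N-1, N s²) ds` with
`g(r) = r e^{2r²} erfc(√2 r)`. Since `-e^{-t²}/(2t)` is an antiderivative of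
`e^{-t²}(1 + 1/(2t²))`, the Gaussian tail obeys the Mills-ratio bounds
`x e^{x²} erfc x ∈ [1/√π / (1 + 1/(2x²)), 1/√π]`, so `0 ≤ g ≤ 1/√(2π)` and `g → 1/√(2π)`.
The Chernoff bound `P(n, x) ≤ e^{(1/c - 1) x} c^n` gives
`P(N-1, N s²) ≤ (s² e^{1-s²})^N / s² → 0` for `s < 1`, so `Q(N-1, N s²) → 1` there, and
dominated convergence concludes.
-/

open Set Topology

section Erfc

lemma integrableOn_exp_neg_sq (s : Set ℝ) : IntegrableOn (fun t : ℝ => exp (-t ^ 2)) s := by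
  simpa using (integrable_exp_neg_mul_sq one_pos).integrableOn

lemma erfc_eq_integral_Ioi (x : ℝ) : erfc x = 2 / √π * ∫ t in Ioi x, exp (-t ^ 2) := by
  have hhalf : ∫ t in Ioi (0 : ℝ), exp (-t ^ 2) = √π / 2 := by
    simpa using integral_gaussian_Ioi 1
  rw [erfc, erf, ← intervalIntegral.integral_Ioi_sub_Ioi' (integrableOn_exp_neg_sq _)
    (integrableOn_exp_neg_sq _), hhalf]
  field_simp
  ring

lemma erfc_nonneg (x : ℝ) : 0 ≤ erfc x := by
  rw [erfc_eq_integral_Ioi]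
  have : 0 ≤ ∫ t in Ioi x, exp (-t ^ 2) := integral_nonneg fun t => (exp_pos _).le
  positivity

@[fun_prop]
lemma continuous_erfc : Continuous erfc :=
  continuous_const.sub <| continuous_const.mul <| intervalIntegral.continuous_primitive
    (fun _ _ => (by fun_prop : Continuous fun t : ℝ => exp (-t ^ 2)).intervalIntegrable _ _) 0

lemma hasDerivAt_neg_exp_neg_sq_div {t : ℝ} (ht : t ≠ 0) :
    HasDerivAt (fun t => -exp (-t ^ 2) / (2 * t)) (exp (-t ^ 2) * (1 + 1 / (2 * t ^ 2))) t := by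
  have hnum : HasDerivAt (fun t : ℝ => -exp (-t ^ 2)) (2 * t * exp (-t ^ 2)) t := by
    refine ((hasDerivAt_pow 2 t).neg.exp).neg.congr_deriv ?_
    simp
    ring
  refine (hnum.div ((hasDerivAt_id t).const_mul 2) (by simpa using ht)).congr_deriv ?_
  simp only [id]
  field_simp
  ring

lemma tendsto_neg_exp_neg_sq_div : Tendsto (fun t => -exp (-t ^ 2) / (2 * t)) atTop (𝓝 0) := by
  have hexp : Tendsto (fun t : ℝ => exp (-t ^ 2)) atTop (𝓝 0) :=
    tendsto_exp_atBot.comp (tendsto_neg_atTop_atBot.comp (tendsto_pow_atTop two_ne_zero))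
  simpa using hexp.neg.div_atTop (tendsto_id.const_mul_atTop two_pos)

variable {x : ℝ}

lemma integrableOn_exp_neg_sq_mul_Ioi (hx : 0 < x) :
    IntegrableOn (fun t => exp (-t ^ 2) * (1 + 1 / (2 * t ^ 2))) (Ioi x) :=
  integrableOn_Ioi_deriv_of_nonneg' (fun t ht => hasDerivAt_neg_exp_neg_sq_div (hx.trans_le ht).ne')
    (fun t _ => by positivity) tendsto_neg_exp_neg_sq_div

lemma integral_exp_neg_sq_mul_Ioi (hx : 0 < x) :
    ∫ t in Ioi x, exp (-t ^ 2) * (1 + 1 / (2 * t ^ 2)) = exp (-x ^ 2) / (2 * x) := by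
  rw [integral_Ioi_of_hasDerivAt_of_nonneg'
    (fun t ht => hasDerivAt_neg_exp_neg_sq_div (hx.trans_le ht).ne') (fun t _ => by positivity)
    tendsto_neg_exp_neg_sq_div]
  ring

lemma integral_exp_neg_sq_Ioi_le (hx : 0 < x) :
    ∫ t in Ioi x, exp (-t ^ 2) ≤ exp (-x ^ 2) / (2 * x) := by
  rw [← integral_exp_neg_sq_mul_Ioi hx]
  refine setIntegral_mono_on (integrableOn_exp_neg_sq _) (integrableOn_exp_neg_sq_mul_Ioi hx)
    measurableSet_Ioi fun t _ => le_mul_of_one_le_right (exp_pos _).le ?_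
  have : 0 ≤ 1 / (2 * t ^ 2) := by positivity
  linarith

lemma div_le_integral_exp_neg_sq_Ioi (hx : 0 < x) :
    exp (-x ^ 2) / (2 * x) ≤ (1 + 1 / (2 * x ^ 2)) * ∫ t in Ioi x, exp (-t ^ 2) := by
  rw [← integral_exp_neg_sq_mul_Ioi hx, ← integral_const_mul]
  refine setIntegral_mono_on (integrableOn_exp_neg_sq_mul_Ioi hx)
    ((integrableOn_exp_neg_sq _).const_mul _) measurableSet_Ioi fun t (ht : x < t) => ?_
  rw [mul_comm (1 + _)]
  gcongr

lemma mul_exp_sq_mul_erfc_le (hx : 0 < x) : x * exp (x ^ 2) * erfc x ≤ 1 / √π := by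
  rw [erfc_eq_integral_Ioi]
  calc x * exp (x ^ 2) * (2 / √π * ∫ t in Ioi x, exp (-t ^ 2))
      ≤ x * exp (x ^ 2) * (2 / √π * (exp (-x ^ 2) / (2 * x))) := by
        gcongr
        exact integral_exp_neg_sq_Ioi_le hx
    _ = 1 / √π := by
        rw [exp_neg]
        field_simp

lemma div_le_mul_exp_sq_mul_erfc (hx : 0 < x) :
    1 / √π / (1 + 1 / (2 * x ^ 2)) ≤ x * exp (x ^ 2) * erfc x := by
  rw [div_le_iff₀ (by positivity), erfc_eq_integral_Ioi]
  calc 1 / √π = x * exp (x ^ 2) * (2 / √π * (exp (-x ^ 2) / (2 * x))) := by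
        rw [exp_neg]
        field_simp
    _ ≤ x * exp (x ^ 2) * (2 / √π * ((1 + 1 / (2 * x ^ 2)) * ∫ t in Ioi x, exp (-t ^ 2))) := by
        gcongr
        exact div_le_integral_exp_neg_sq_Ioi hx
    _ = _ := by ring

lemma tendsto_mul_exp_sq_mul_erfc :
    Tendsto (fun x => x * exp (x ^ 2) * erfc x) atTop (𝓝 (1 / √π)) := by
  have hlower : Tendsto (fun x : ℝ => 1 / √π / (1 + 1 / (2 * x ^ 2))) atTop (𝓝 (1 / √π)) := by
    have : Tendsto (fun x : ℝ => 1 / (2 * x ^ 2)) atTop (𝓝 0) :=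
      tendsto_const_nhds.div_atTop ((tendsto_pow_atTop two_ne_zero).const_mul_atTop two_pos)
    have h := (tendsto_const_nhds (x := 1 / √π)).div (this.const_add 1) (by norm_num)
    rwa [add_zero, div_one] at h
  refine tendsto_of_tendsto_of_tendsto_of_le_of_le' hlower tendsto_const_nhds ?_ ?_ <;>
    filter_upwards [Ioi_mem_atTop 0] with x hx
  exacts [div_le_mul_exp_sq_mul_erfc hx, mul_exp_sq_mul_erfc_le hx]

lemma mul_exp_two_mul_sq_mul_erfc_eq (r : ℝ) :
    r * exp (2 * r ^ 2) * erfc (√2 * r) = √2 * r * exp ((√2 * r) ^ 2) * erfc (√2 * r) / √2 := by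
  rw [mul_pow, sq_sqrt zero_le_two]
  field_simp

lemma mul_exp_two_mul_sq_mul_erfc_le {r : ℝ} (hr : 0 < r) :
    r * exp (2 * r ^ 2) * erfc (√2 * r) ≤ 1 / √(2 * π) := by
  rw [mul_exp_two_mul_sq_mul_erfc_eq, sqrt_mul zero_le_two, mul_comm √2 √π, ← div_div]
  gcongr
  exact mul_exp_sq_mul_erfc_le (by positivity)

lemma tendsto_mul_exp_two_mul_sq_mul_erfc :
    Tendsto (fun r => r * exp (2 * r ^ 2) * erfc (√2 * r)) atTop (𝓝 (1 / √(2 * π))) := by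
  have h := (tendsto_mul_exp_sq_mul_erfc.comp
    (tendsto_id.const_mul_atTop (by positivity : (0 : ℝ) < √2))).div_const √2
  rw [sqrt_mul zero_le_two, mul_comm √2 √π, ← div_div]
  exact h.congr fun r => (mul_exp_two_mul_sq_mul_erfc_eq r).symm

end Erfc

section IncompleteGamma

variable {n x c : ℝ}

/-- Chernoff bound: on `(0, x]`, `e^{-t} ≤ e^{(1/c - 1)(x - t)} e^{-t}`, and the right-hand side
integrates over `(0, ∞)` against `t^{n-1}` to `e^{(1/c - 1)x} c^n Γ(n)`. -/
lemma lowGamma_le_exp_mul_rpow (hn : 0 < n) (hx : 0 ≤ x) (hc0 : 0 < c) (hc1 : c ≤ 1) :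
    lowGamma n x ≤ exp ((c⁻¹ - 1) * x) * (c ^ n * Gamma n) := by
  have hkernel := integral_rpow_mul_exp_neg_mul_Ioi hn (inv_pos.2 hc0)
  rw [one_div, inv_inv] at hkernel
  have hint : IntegrableOn (fun t => exp ((c⁻¹ - 1) * x) * (t ^ (n - 1) * exp (-(c⁻¹ * t))))
      (Ioi 0) :=
    (Integrable.of_integral_ne_zero (by rw [hkernel]; positivity)).const_mul _
  have hc : 1 ≤ c⁻¹ := (one_le_inv₀ hc0).2 hc1
  rw [← hkernel, ← integral_const_mul, lowGamma, intervalIntegral.integral_of_le hx]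
  calc ∫ t in Ioc 0 x, t ^ (n - 1) * exp (-t)
      ≤ ∫ t in Ioc 0 x, exp ((c⁻¹ - 1) * x) * (t ^ (n - 1) * exp (-(c⁻¹ * t))) := by
        refine setIntegral_mono_on ?_ (hint.mono_set Ioc_subset_Ioi_self) measurableSet_Ioc
          fun t ht => ?_
        · simpa only [mul_comm] using (GammaIntegral_convergent hn).mono_set Ioc_subset_Ioi_self
        rw [mul_left_comm, ← exp_add]
        exact mul_le_mul_of_nonneg_left (exp_le_exp.2 (by nlinarith [ht.2])) (rpow_nonneg ht.1.le _)
    _ ≤ ∫ t in Ioi 0, exp ((c⁻¹ - 1) * x) * (t ^ (n - 1) * exp (-(c⁻¹ * t))) :=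
        setIntegral_mono_set hint
          ((ae_restrict_iff' measurableSet_Ioi).2 (ae_of_all _ fun t (ht : 0 < t) => by positivity))
          Ioc_subset_Ioi_self.eventuallyLE

lemma regP_le_exp_mul_rpow (hn : 0 < n) (hx : 0 ≤ x) (hc0 : 0 < c) (hc1 : c ≤ 1) :
    regP n x ≤ exp ((c⁻¹ - 1) * x) * c ^ n := by
  have hΓ := Gamma_pos_of_pos hn
  calc regP n x ≤ (Gamma n)⁻¹ * (exp ((c⁻¹ - 1) * x) * (c ^ n * Gamma n)) :=
        mul_le_mul_of_nonneg_left (lowGamma_le_exp_mul_rpow hn hx hc0 hc1) (by positivity)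
    _ = exp ((c⁻¹ - 1) * x) * c ^ n := by field_simp

lemma regP_nonneg (hn : 0 ≤ n) (hx : 0 ≤ x) : 0 ≤ regP n x :=
  mul_nonneg (inv_nonneg.2 (Gamma_nonneg_of_nonneg hn)) <|
    intervalIntegral.integral_nonneg hx fun _ ht => mul_nonneg (rpow_nonneg ht.1 _) (exp_pos _).le

lemma regQ_mem_Icc (hn : 0 < n) (hx : 0 ≤ x) : regQ n x ∈ Icc 0 1 := by
  have hP := regP_le_exp_mul_rpow hn hx one_pos le_rfl
  simp only [inv_one, sub_self, zero_mul, exp_zero, one_rpow, mul_one] at hP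
  exact ⟨sub_nonneg.2 hP, sub_le_self _ (regP_nonneg hn.le hx)⟩

lemma continuous_regQ (hn : 1 ≤ n) : Continuous (regQ n) :=
  continuous_const.sub <| continuous_const.mul <| intervalIntegral.continuous_primitive
    (fun _ _ => ((continuous_rpow_const (sub_nonneg.2 hn)).mul
      (by fun_prop : Continuous fun t : ℝ => exp (-t))).intervalIntegrable _ _) 0

lemma tendsto_regP_natCast_sub_one_mul (hc0 : 0 < c) (hc1 : c < 1) :
    Tendsto (fun N : ℕ => regP (N - 1) (N * c)) atTop (𝓝 0) := by
  have hq : c * exp (1 - c) < 1 := by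
    have := add_one_lt_exp (sub_ne_zero.2 hc1.ne)
    calc c * exp (1 - c) < exp (c - 1) * exp (1 - c) := by gcongr; linarith
      _ = 1 := by rw [← exp_add]; simp
  have hbound : Tendsto (fun N : ℕ => (c * exp (1 - c)) ^ N / c) atTop (𝓝 0) := by
    simpa using (tendsto_pow_atTop_nhds_zero_of_lt_one (by positivity) hq).div_const c
  refine squeeze_zero' ?_ ?_ hbound <;> filter_upwards [eventually_ge_atTop 2] with N hN <;>
    have hN : (1 : ℝ) < N := by exact_mod_cast hN
  · exact regP_nonneg (by linarith) (by positivity)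
  calc regP (N - 1) (N * c) ≤ exp ((c⁻¹ - 1) * (N * c)) * c ^ ((N : ℝ) - 1) :=
        regP_le_exp_mul_rpow (by linarith) (by positivity) hc0 hc1.le
    _ = (c * exp (1 - c)) ^ N / c := by
        rw [rpow_sub_one hc0.ne', rpow_natCast, mul_pow, ← exp_nat_mul]
        field_simp

end IncompleteGamma

section Rescaling

variable {g : ℝ → ℝ} {B L : ℝ}

lemma tendsto_integral_mul_regQ_sqrt_mul (hg : Measurable g) (hB : ∀ r, 0 < r → |g r| ≤ B)
    (hL : Tendsto g atTop (𝓝 L)) :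
    Tendsto (fun N : ℕ => ∫ s in (0 : ℝ)..1, g (√N * s) * regQ (N - 1) ((√N * s) ^ 2)) atTop
      (𝓝 L) := by
  have hlim := intervalIntegral.tendsto_integral_filter_of_dominated_convergence
    (F := fun (N : ℕ) (s : ℝ) => g (√N * s) * regQ (N - 1) ((√N * s) ^ 2)) (f := fun _ => L)
    (a := 0) (b := 1) (μ := volume) (l := atTop) (fun _ => B) ?_ ?_ intervalIntegrable_const ?_
  · simpa using hlim
  · filter_upwards [eventually_ge_atTop 2] with N hN
    have hn : (1 : ℝ) ≤ N - 1 := by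
      have : (2 : ℝ) ≤ N := by exact_mod_cast hN
      linarith
    exact ((hg.comp (measurable_const_mul _)).mul ((continuous_regQ hn).measurable.comp
      ((measurable_const_mul _).pow_const 2))).aestronglyMeasurable
  · filter_upwards [eventually_ge_atTop 2] with N hN
    refine ae_of_all _ fun s hs => ?_
    rw [uIoc_of_le zero_le_one] at hs
    have hN : (1 : ℝ) < N := by exact_mod_cast hN
    obtain ⟨hQ0, hQ1⟩ := regQ_mem_Icc (n := N - 1) (by linarith) (sq_nonneg (√N * s))
    rw [norm_mul, norm_eq_abs, norm_eq_abs, abs_of_nonneg hQ0]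
    exact (mul_le_of_le_one_right (abs_nonneg _) hQ1).trans
      (hB _ (mul_pos (sqrt_pos.2 (by linarith)) hs.1))
  -- The point `s = 1` must be discarded: there `Q(N-1, N) → 1/2`.
  · filter_upwards [compl_mem_ae_iff.2 (measure_singleton (1 : ℝ))] with s hs_ne hs
    rw [uIoc_of_le zero_le_one] at hs
    have hs1 : s < 1 := lt_of_le_of_ne hs.2 hs_ne
    have hg := hL.comp ((tendsto_sqrt_atTop.comp tendsto_natCast_atTop_atTop).atTop_mul_const hs.1)
    have hQ := (tendsto_regP_natCast_sub_one_mul (c := s ^ 2) (pow_pos hs.1 2)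
      (by nlinarith [hs.1])).const_sub 1
    rw [sub_zero] at hQ
    simpa [mul_pow, regQ] using hg.mul hQ

lemma tendsto_inv_sqrt_mul_integral_mul_regQ (hg : Measurable g)
    (hB : ∀ r, 0 < r → |g r| ≤ B) (hL : Tendsto g atTop (𝓝 L)) :
    Tendsto (fun N : ℕ => 1 / √N * ∫ r in (0 : ℝ)..√N, g r * regQ (N - 1) (r ^ 2)) atTop
      (𝓝 L) := by
  refine (tendsto_integral_mul_regQ_sqrt_mul hg hB hL).congr' ?_
  filter_upwards [eventually_gt_atTop 0] with N hN
  have hsqrt : 0 < √(N : ℝ) := sqrt_pos.2 (by exact_mod_cast hN)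
  have := intervalIntegral.integral_comp_mul_left (a := 0) (b := 1)
    (fun r => g r * regQ (N - 1) (r ^ 2)) hsqrt.ne'
  simp only [mul_zero, mul_one] at this
  rw [this, smul_eq_mul, one_div]

end Rescaling

theorem correction_term_complex_eigenvalues_GinOE :
    Tendsto (fun N : ℕ => (1 / Real.sqrt N) *
        ∫ r in (0:ℝ)..Real.sqrt N,
          r * Real.exp (2 * r ^ 2) * erfc (Real.sqrt 2 * r) * regQ ((N : ℝ) - 1) (r ^ 2))
      atTop (nhds (1 / Real.sqrt (2 * π))) :=
  tendsto_inv_sqrt_mul_integral_mul_regQ (by fun_prop)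
    (fun r hr => (abs_of_nonneg (by have := erfc_nonneg (√2 * r); positivity)).trans_le
      (mul_exp_two_mul_sq_mul_erfc_le hr))
    tendsto_mul_exp_two_mul_sq_mul_erfc
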